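/- For any three jointly distributed random variables X, Y, W on a finite probability space, H(W) + I(X:Y|W) ≤ I(X:Y) + H(W|X) + H(W|Y). -/

import Mathlib

open scoped BigOperators

namespace PaperIngleton

open Classical in
/-- Probability of an event under a pmf `p` on a finite sample space. -/
noncomputable def prob {Ω : Type*} [Fintype Ω] (p : Ω → ℝ) (E : Ω → Prop) : ℝ :=
  ∑ ω, if E ω then p ω else 0

/-- Shannon entropy of a finitely-valued random variable `X` under pmf `p`. -/
noncomputable def ent {Ω S : Type*} [Fintype Ω] [Fintype S] (p : Ω → ℝ) (X : Ω → S) : ℝ :=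
  -∑ s : S, prob p (fun ω => X ω = s) * Real.log (prob p (fun ω => X ω = s))

/-- Conditional entropy `H(X|Y)`. -/
noncomputable def condEnt {Ω S T : Type*} [Fintype Ω] [Fintype S] [Fintype T]
    (p : Ω → ℝ) (X : Ω → S) (Y : Ω → T) : ℝ :=
  ent p (fun ω => (X ω, Y ω)) - ent p Y

/-- Mutual information `I(X:Y)`. -/
noncomputable def mi {Ω S T : Type*} [Fintype Ω] [Fintype S] [Fintype T]
    (p : Ω → ℝ) (X : Ω → S) (Y : Ω → T) : ℝ :=
  ent p X + ent p Y - ent p (fun ω => (X ω, Y ω))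

/-- Conditional mutual information `I(X:Y|Z)`. -/
noncomputable def cmi {Ω S T U : Type*} [Fintype Ω] [Fintype S] [Fintype T] [Fintype U]
    (p : Ω → ℝ) (X : Ω → S) (Y : Ω → T) (Z : Ω → U) : ℝ :=
  ent p (fun ω => (X ω, Z ω)) + ent p (fun ω => (Y ω, Z ω))
    - ent p (fun ω => (X ω, Y ω, Z ω)) - ent p Z

end PaperIngleton

/-!
Expanded into joint entropies, all terms cancel except `H(X,Y) ≤ H(X,Y,W)`, so the inequality is
just the monotonicity of entropy under the projection `(X, Y, W) ↦ (X, Y)`.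
-/

namespace PaperIngleton

section

variable {Ω A C : Type*} [Fintype Ω] [Fintype A] (p : Ω → ℝ)

lemma prob_nonneg (hp : ∀ ω, 0 ≤ p ω) (E : Ω → Prop) : 0 ≤ prob p E :=
  Finset.sum_nonneg fun ω _ => by split_ifs <;> simp [hp ω]

open Classical in
lemma prob_comp_eq_sum (Z : Ω → A) (f : A → C) (c : C) :
    prob p (fun ω => f (Z ω) = c) = ∑ z with f z = c, prob p (fun ω => Z ω = z) := by
  unfold prob
  rw [Finset.sum_comm]
  refine Finset.sum_congr rfl fun ω _ => ?_
  rw [Finset.sum_filter,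
    Finset.sum_eq_single (Z ω) (fun z _ hz => by simp [Ne.symm hz]) (by simp)]
  simp

open Classical in
lemma ent_comp_le [Fintype C] (hp : ∀ ω, 0 ≤ p ω) (Z : Ω → A) (f : A → C) :
    ent p (fun ω => f (Z ω)) ≤ ent p Z := by
  set r : A → ℝ := fun z => prob p (fun ω => Z ω = z)
  set q : C → ℝ := fun c => prob p (fun ω => f (Z ω) = c)
  have hr0 : ∀ z, 0 ≤ r z := fun z => prob_nonneg p hp _
  have hq : ∀ c, q c = ∑ z with f z = c, r z := prob_comp_eq_sum p Z f
  have hr_le : ∀ z, r z ≤ q (f z) := fun z => by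
    rw [hq]
    exact Finset.single_le_sum (f := r) (fun z _ => hr0 z)
      (Finset.mem_filter.2 ⟨Finset.mem_univ z, rfl⟩)
  unfold ent
  rw [neg_le_neg_iff, ← Finset.sum_fiberwise Finset.univ f]
  refine Finset.sum_le_sum fun c _ => ?_
  calc ∑ z with f z = c, r z * Real.log (r z)
      ≤ ∑ z with f z = c, r z * Real.log (q c) := by
        refine Finset.sum_le_sum fun z hz => ?_
        rcases (hr0 z).eq_or_lt with h | h
        · rw [← h, zero_mul, zero_mul]
        · rw [← (Finset.mem_filter.1 hz).2]
          exact mul_le_mul_of_nonneg_left (Real.log_le_log h (hr_le z)) h.le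
    _ = q c * Real.log (q c) := by rw [hq, Finset.sum_mul]

lemma ent_prod_comm [Fintype C] (hp : ∀ ω, 0 ≤ p ω) (X : Ω → A) (Y : Ω → C) :
    ent p (fun ω => (X ω, Y ω)) = ent p (fun ω => (Y ω, X ω)) :=
  le_antisymm (ent_comp_le p hp (fun ω => (Y ω, X ω)) Prod.swap)
    (ent_comp_le p hp (fun ω => (X ω, Y ω)) Prod.swap)

end

theorem stmt3_general {Ω S T V : Type} [Fintype Ω] [Fintype S] [Fintype T] [Fintype V]
    (p : Ω → ℝ) (hp : ∀ ω, 0 ≤ p ω)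
    (X : Ω → S) (Y : Ω → T) (W : Ω → V) :
    ent p W + cmi p X Y W ≤ mi p X Y + condEnt p W X + condEnt p W Y := by
  have hXY : ent p (fun ω => (X ω, Y ω)) ≤ ent p (fun ω => (X ω, Y ω, W ω)) :=
    ent_comp_le p hp (fun ω => (X ω, Y ω, W ω)) fun t => (t.1, t.2.1)
  rw [cmi, mi, condEnt, condEnt, ent_prod_comm p hp W X, ent_prod_comm p hp W Y]
  linarith

theorem stmt3 {Ω S T V : Type} [Fintype Ω] [Fintype S] [Fintype T] [Fintype V]
    (p : Ω → ℝ) (hp : ∀ ω, 0 ≤ p ω) (hp1 : ∑ ω, p ω = 1)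
    (X : Ω → S) (Y : Ω → T) (W : Ω → V) :
    ent p W + cmi p X Y W ≤ mi p X Y + condEnt p W X + condEnt p W Y :=
  stmt3_general p hp X Y W

end PaperIngleton
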